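/- Let U ⊆ V_{n,m}, let 𝒰 be the set of connected components of G[U], and let 0 ≤ s ≤ n - m. For every connected component V of the induced subgraph G[ζ^s(U)], there exists a subset 𝒪 ⊆ 𝒰 such that |⋃V| ≤ m - 1 + Σ_{Z ∈ 𝒪} |Z|; furthermore, distinct connected components of G[ζ^s(U)] can be assigned pairwise disjoint such subsets 𝒪. -/

import Mathlib

/-- `Vnm n m` is the collection of all `m`-element subsets of `{0,...,n-1}`. -/
def Vnm (n m : ℕ) : Set (Finset ℕ) := {b | b ⊆ Finset.range n ∧ b.card = m}

/-- The ζ-operator: unions of pairs of members of `U` intersecting in `m - 1` elements. -/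
def zeta (m : ℕ) (U : Set (Finset ℕ)) : Set (Finset ℕ) :=
  {x | ∃ c ∈ U, ∃ d ∈ U, (c ∩ d).card = m - 1 ∧ x = c ∪ d}

/-- Iterated ζ-operator: `ζ^0(U) = U`, `ζ^{v+1}(U) = ζ(ζ^v(U))`
(the level parameter increases by one at each step since `ζ^v(U) ⊆ V_{n,m+v}`). -/
def zetaIter (m : ℕ) : ℕ → Set (Finset ℕ) → Set (Finset ℕ)
  | 0, U => U
  | v + 1, U => zeta (m + v) (zetaIter m v U)

/-- The union `⋃ U` of all members of a family of finite sets. -/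
def unionAll (U : Set (Finset ℕ)) : Set ℕ := ⋃ b ∈ U, (b : Set ℕ)

/-- The induced subgraph `G[U]` of the Johnson graph `J_{n,m}`:
vertices are the members of `U`, two of them adjacent iff distinct with
intersection of cardinality `m - 1`. -/
def inducedGraph (m : ℕ) (U : Set (Finset ℕ)) : SimpleGraph U where
  Adj x y := (x : Finset ℕ) ≠ (y : Finset ℕ) ∧ ((x : Finset ℕ) ∩ (y : Finset ℕ)).card = m - 1
  symm := ⟨fun x y ⟨h1, h2⟩ => ⟨h1.symm, by rwa [Finset.inter_comm]⟩⟩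
  loopless := ⟨fun x ⟨h1, _⟩ => h1 rfl⟩

/-- The connected components of `G[U]`, viewed as subsets of `U`. -/
def componentSets (m : ℕ) (U : Set (Finset ℕ)) : Set (Set (Finset ℕ)) :=
  {Z | ∃ C : (inducedGraph m U).ConnectedComponent,
    Z = Subtype.val '' {x : U | (inducedGraph m U).connectedComponentMk x = C}}

/-!
Induction on `s`, carrying for every component of `G[ζ^s(U)]` a family of components of `G[U]`,
disjoint for distinct components. For `s = 0` take `𝒪 = {V}`: walking through a component in
order of distance, each new `m`-set adds one new point. For the step from `W ⊆ V_{n,k}` to `ζ(W)`,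
every member of `ζ(W)` lies above a single component of `G[W]`, and walks in `G[W]` lift to
`G[ζ(W)]`, so distinct components `D` of `G[ζ(W)]` lie above disjoint sets of components of
`G[W]`. The union of `D` is covered by the unions of the components `C` below it; ordering these by
distance in `D`, each new one meets an earlier one in the `k` common points of two adjacent
`(k + 1)`-sets. Hence `|⋃ D| ≤ |⋃ C₀| + ∑ (|⋃ C| - k)`, and since `m - 1 ≤ k` the bounds for the
`C` add up to the bound for `D`, with the union of their families as `𝒪`.
-/

open SimpleGraph Set Function

theorem ncard_biUnion_le_of_exists_lower {ι α : Type*} [DecidableEq ι] {s : Finset ι}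
    {A : ι → Set α} (hA : ∀ i ∈ s, (A i).Finite) (rank b : ι → ℕ) {i₀ : ι} (hi₀ : i₀ ∈ s)
    (hlower : ∀ i ∈ s, i ≠ i₀ → ∃ j ∈ s, rank j < rank i ∧ (A i \ A j).ncard ≤ b i) :
    (⋃ i ∈ s, A i).ncard ≤ (A i₀).ncard + ∑ i ∈ s.erase i₀, b i := by
  classical
  choose! p hps hprank hpb using hlower
  -- an element of the union lies in `A i₀` or is new in the set of least rank containing it
  have hcover : ⋃ i ∈ s, A i ⊆ A i₀ ∪ ⋃ i ∈ s.erase i₀, (A i \ A (p i)) := by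
    intro a ha
    obtain ⟨i, hi, hai⟩ := mem_iUnion₂.1 ha
    obtain ⟨j, hj, hmin⟩ := (s.filter (a ∈ A ·)).exists_min_image rank
      ⟨i, Finset.mem_filter.2 ⟨hi, hai⟩⟩
    obtain ⟨hjs, haj⟩ := Finset.mem_filter.1 hj
    by_cases hj₀ : j = i₀
    · exact Or.inl (hj₀ ▸ haj)
    refine Or.inr (mem_iUnion₂.2 ⟨j, Finset.mem_erase.2 ⟨hj₀, hjs⟩, haj, fun hapj => ?_⟩)
    have := hmin (p j) (Finset.mem_filter.2 ⟨hps j hjs hj₀, hapj⟩)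
    exact absurd (hprank j hjs hj₀) this.not_gt
  have hfin : (A i₀ ∪ ⋃ i ∈ s.erase i₀, (A i \ A (p i))).Finite :=
    (hA i₀ hi₀).union <| (s.erase i₀).finite_toSet.biUnion
      fun i hi => (hA i (Finset.mem_of_mem_erase hi)).sdiff
  calc (⋃ i ∈ s, A i).ncard
      ≤ (A i₀ ∪ ⋃ i ∈ s.erase i₀, (A i \ A (p i))).ncard := ncard_le_ncard hcover hfin
    _ ≤ (A i₀).ncard + ∑ i ∈ s.erase i₀, (A i \ A (p i)).ncard :=
        (ncard_union_le _ _).trans (Nat.add_le_add_left (Finset.set_ncard_biUnion_le _ _) _)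
    _ ≤ (A i₀).ncard + ∑ i ∈ s.erase i₀, b i := by
        gcongr with i hi
        exact hpb i (Finset.mem_of_mem_erase hi) (Finset.ne_of_mem_erase hi)

theorem SimpleGraph.Reachable.exists_adj_dist_lt {V : Type*} {G : SimpleGraph V} {u v : V}
    (h : G.Reachable u v) (hne : u ≠ v) : ∃ w, G.Adj w v ∧ G.dist u w < G.dist u v := by
  obtain ⟨p, hp⟩ := h.exists_walk_length_eq_dist
  have hnil : ¬p.Nil := Walk.not_nil_of_ne hne
  refine ⟨p.penultimate, p.adj_penultimate hnil, (dist_le p.dropLast).trans_lt ?_⟩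
  rw [Walk.length_dropLast, ← hp]
  exact Nat.sub_lt (Walk.not_nil_iff_lt_length.1 hnil) one_pos

theorem ncard_biUnion_le_of_connectedComponent {X ι α : Type*} [DecidableEq ι]
    {G : SimpleGraph X} {D : G.ConnectedComponent} (label : X → ι) (A : ι → Set α) (k : ℕ)
    {s : Finset ι} (hs : ∀ i, i ∈ s ↔ ∃ x ∈ D.supp, label x = i) (hA : ∀ i ∈ s, (A i).Finite)
    (hadj : ∀ x y, G.Adj x y → label x ≠ label y → k ≤ (A (label x) ∩ A (label y)).ncard)
    {x₀ : X} (hx₀ : x₀ ∈ D.supp) :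
    (⋃ i ∈ s, A i).ncard ≤ (A (label x₀)).ncard + ∑ i ∈ s.erase (label x₀), ((A i).ncard - k) := by
  -- rank a label by its distance from `x₀`; a shortest path to a closest carrier of `i` enters
  -- it from a vertex whose label has smaller rank
  let rank i := sInf {d | ∃ x ∈ D.supp, label x = i ∧ G.dist x₀ x = d}
  have rank_le {x} (hx : x ∈ D.supp) : rank (label x) ≤ G.dist x₀ x := Nat.sInf_le ⟨x, hx, rfl, rfl⟩
  refine ncard_biUnion_le_of_exists_lower hA rank _ ((hs _).2 ⟨x₀, hx₀, rfl⟩) fun i hi hne => ?_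
  have hcarriers : {d | ∃ x ∈ D.supp, label x = i ∧ G.dist x₀ x = d}.Nonempty := by
    obtain ⟨x, hx, rfl⟩ := (hs i).1 hi
    exact ⟨_, x, hx, rfl, rfl⟩
  obtain ⟨x, hxD, rfl, hx⟩ := Nat.sInf_mem hcarriers
  replace hx : G.dist x₀ x = rank (label x) := hx
  have hreach : G.Reachable x₀ x := ConnectedComponent.exact (hx₀.trans hxD.symm)
  obtain ⟨z, hzx, hz⟩ := hreach.exists_adj_dist_lt (by rintro rfl; exact hne rfl)
  have hzD : z ∈ D.supp := (ConnectedComponent.connectedComponentMk_eq_of_adj hzx).trans hxD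
  have hlabel : label x ≠ label z := fun h => by have := rank_le hzD; rw [← h] at this; omega
  refine ⟨label z, (hs _).2 ⟨z, hzD, rfl⟩, by have := rank_le hzD; omega, ?_⟩
  have hinter := hadj x z hzx.symm hlabel
  have := ncard_inter_add_ncard_sdiff_eq_ncard (A (label x)) (A (label z)) (hA _ hi)
  omega

theorem Vnm_finite (n m : ℕ) : (Vnm n m).Finite :=
  (Finset.range n).powerset.finite_toSet.subset fun _ hb => Finset.mem_powerset.2 hb.1

theorem zeta_subset_Vnm {n k : ℕ} {W : Set (Finset ℕ)} (hk : 1 ≤ k) (hW : W ⊆ Vnm n k) :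
    zeta k W ⊆ Vnm n (k + 1) := by
  rintro _ ⟨c, hc, d, hd, hcd, rfl⟩
  refine ⟨Finset.union_subset (hW hc).1 (hW hd).1, ?_⟩
  have := Finset.card_union_add_card_inter c d
  have := (hW hc).2
  have := (hW hd).2
  omega

theorem zetaIter_subset_Vnm {n m : ℕ} {U : Set (Finset ℕ)} (hm : 1 ≤ m) (hU : U ⊆ Vnm n m) :
    ∀ s, zetaIter m s U ⊆ Vnm n (m + s)
  | 0 => hU
  | s + 1 => zeta_subset_Vnm (by omega) (zetaIter_subset_Vnm hm hU s)

theorem inducedGraph_reachable_of_le_card_inter {n k : ℕ} {W : Set (Finset ℕ)}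
    (hW : W ⊆ Vnm n k) {x y : W} (h : k - 1 ≤ ((x : Finset ℕ) ∩ y).card) :
    (inducedGraph k W).Reachable x y := by
  by_cases hxy : x = y
  · exact hxy ▸ Reachable.refl x
  have hne : (x : Finset ℕ) ≠ y := Subtype.coe_ne_coe.2 hxy
  have hlt : ((x : Finset ℕ) ∩ y).card < k := by
    by_contra! hge
    have hx : (x : Finset ℕ) ∩ y = x :=
      Finset.eq_of_subset_of_card_le Finset.inter_subset_left ((hW x.2).2 ▸ hge)
    exact hne (Finset.eq_of_subset_of_card_le (hx ▸ Finset.inter_subset_right)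
      ((hW y.2).2.trans (hW x.2).2.symm).le)
  exact Adj.reachable ⟨hne, by omega⟩

section Components

variable {k : ℕ} {W : Set (Finset ℕ)}

def componentSet (C : (inducedGraph k W).ConnectedComponent) : Set (Finset ℕ) :=
  Subtype.val '' C.supp

theorem mem_componentSets {Z : Set (Finset ℕ)} :
    Z ∈ componentSets k W ↔ ∃ C : (inducedGraph k W).ConnectedComponent, Z = componentSet C :=
  Iff.rfl

theorem componentSet_injective : Injective (componentSet (k := k) (W := W)) :=
  Subtype.val_injective.image_injective.comp ConnectedComponent.supp_injective

theorem componentSet_subset (C : (inducedGraph k W).ConnectedComponent) : componentSet C ⊆ W := by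
  rintro _ ⟨x, -, rfl⟩
  exact x.2

theorem unionAll_componentSet_finite {n : ℕ} (hW : W ⊆ Vnm n k)
    (C : (inducedGraph k W).ConnectedComponent) : (unionAll (componentSet C)).Finite :=
  ((Vnm_finite n k).subset ((componentSet_subset C).trans hW)).biUnion
    fun c _ => c.finite_toSet

theorem ncard_unionAll_componentSet_le {n : ℕ} (hW : W ⊆ Vnm n k)
    (C : (inducedGraph k W).ConnectedComponent) :
    (unionAll (componentSet C)).ncard ≤ k - 1 + (componentSet C).ncard := by
  classical
  obtain ⟨x₀, hx₀⟩ := C.nonempty_supp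
  have hfin : (componentSet C).Finite := (Vnm_finite n k).subset ((componentSet_subset C).trans hW)
  have hbound := ncard_biUnion_le_of_connectedComponent Subtype.val
    (fun c : Finset ℕ => (c : Set ℕ)) (k - 1) (s := hfin.toFinset) (by simp [componentSet])
    (fun c _ => c.finite_toSet)
    (fun x y hxy _ => by rw [← Finset.coe_inter, ncard_coe_finset]; exact hxy.2.ge) hx₀
  have hunion : unionAll (componentSet C) = ⋃ c ∈ hfin.toFinset, (c : Set ℕ) := by
    simp [unionAll]
  have hterm : ∀ c ∈ hfin.toFinset.erase x₀.1, ((c : Set ℕ).ncard - (k - 1)) ≤ 1 := by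
    intro c hc
    rw [ncard_coe_finset, (hW (componentSet_subset C (hfin.mem_toFinset.1
      (Finset.mem_of_mem_erase hc)))).2]
    omega
  have hx₀s : x₀.1 ∈ hfin.toFinset := hfin.mem_toFinset.2 ⟨x₀, hx₀, rfl⟩
  have hsum := Finset.sum_le_card_nsmul _ _ 1 hterm
  rw [Finset.card_erase_of_mem hx₀s, smul_eq_mul, mul_one] at hsum
  rw [ncard_coe_finset, (hW x₀.2).2] at hbound
  rw [hunion, ncard_eq_toFinset_card _ hfin]
  have := Finset.card_pos.2 ⟨_, hx₀s⟩
  omega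

end Components

def HasDisjointComponentBound (m : ℕ) (𝒰 : Set (Set (Finset ℕ))) (k : ℕ)
    (W : Set (Finset ℕ)) : Prop :=
  ∃ f : (inducedGraph k W).ConnectedComponent → Finset (Set (Finset ℕ)),
    (∀ C, ↑(f C) ⊆ 𝒰 ∧ (unionAll (componentSet C)).ncard ≤ m - 1 + ∑ Z ∈ f C, Z.ncard) ∧
    Pairwise (Disjoint on f)

theorem hasDisjointComponentBound_componentSets {n m : ℕ} {U : Set (Finset ℕ)}
    (hU : U ⊆ Vnm n m) : HasDisjointComponentBound m (componentSets m U) m U := by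
  classical
  refine ⟨fun C => {componentSet C}, fun C => ⟨?_, ?_⟩, fun C C' hne => ?_⟩
  · simpa using mem_componentSets.2 ⟨C, rfl⟩
  · simpa using ncard_unionAll_componentSet_le hU C
  · simpa using componentSet_injective.ne hne

section Zeta

variable {n k : ℕ} {W : Set (Finset ℕ)}

/-- Independent of the choice: every member of `W` below `x` lies in this component
(`connectedComponentMk_eq_lowerComponent`). -/
noncomputable def lowerComponent (x : zeta k W) : (inducedGraph k W).ConnectedComponent :=
  (inducedGraph k W).connectedComponentMk ⟨x.2.choose, x.2.choose_spec.1⟩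

theorem exists_subset_lowerComponent_eq (x : zeta k W) :
    ∃ c : W, (c : Finset ℕ) ⊆ x ∧ lowerComponent x = (inducedGraph k W).connectedComponentMk c := by
  refine ⟨⟨_, x.2.choose_spec.1⟩, ?_, rfl⟩
  obtain ⟨-, d, -, -, hx⟩ := x.2.choose_spec
  exact Finset.subset_union_left.trans hx.symm.subset

theorem connectedComponentMk_eq_lowerComponent (hk : 1 ≤ k) (hW : W ⊆ Vnm n k)
    (x : zeta k W) {c : W} (hcx : (c : Finset ℕ) ⊆ x) :
    (inducedGraph k W).connectedComponentMk c = lowerComponent x := by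
  obtain ⟨c₀, hc₀x, hx⟩ := exists_subset_lowerComponent_eq x
  rw [hx]
  refine ConnectedComponent.sound (inducedGraph_reachable_of_le_card_inter hW ?_)
  have := Finset.card_le_card (Finset.union_subset hcx hc₀x)
  have := Finset.card_union_add_card_inter (c : Finset ℕ) c₀
  have := (zeta_subset_Vnm hk hW x.2).2
  have := (hW c.2).2
  have := (hW c₀.2).2
  omega

theorem subset_unionAll_lowerComponent (hk : 1 ≤ k) (hW : W ⊆ Vnm n k) (x : zeta k W) :
    ((x : Finset ℕ) : Set ℕ) ⊆ unionAll (componentSet (lowerComponent x)) := by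
  obtain ⟨c, hc, d, hd, -, hx⟩ := x.2
  have below {b : Finset ℕ} (hb : b ∈ W) (hbx : b ⊆ x) : b ∈ componentSet (lowerComponent x) :=
    ⟨⟨b, hb⟩, connectedComponentMk_eq_lowerComponent hk hW x hbx, rfl⟩
  intro a ha
  rw [Finset.mem_coe, hx, Finset.mem_union] at ha
  rcases ha with ha | ha
  · exact mem_iUnion₂.2 ⟨c, below hc (hx ▸ Finset.subset_union_left), ha⟩
  · exact mem_iUnion₂.2 ⟨d, below hd (hx ▸ Finset.subset_union_right), ha⟩

theorem zeta_reachable_of_subset_of_subset (hk : 1 ≤ k) (hW : W ⊆ Vnm n k) {c : Finset ℕ}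
    (hc : c ∈ W) {x y : zeta k W} (hcx : c ⊆ x) (hcy : c ⊆ y) :
    (inducedGraph (k + 1) (zeta k W)).Reachable x y := by
  refine inducedGraph_reachable_of_le_card_inter (zeta_subset_Vnm hk hW) ?_
  have := Finset.card_le_card (Finset.subset_inter hcx hcy)
  have := (hW hc).2
  omega

/-- A path `c₀ ∼ c₁ ∼ ⋯` below gives the path `x ∼ c₀ ∪ c₁ ∼ c₁ ∪ c₂ ∼ ⋯ ∼ y` above. -/
theorem zeta_reachable_of_reachable (hk : 1 ≤ k) (hW : W ⊆ Vnm n k) {c e : W}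
    (hce : (inducedGraph k W).Reachable c e) {x y : zeta k W} (hcx : (c : Finset ℕ) ⊆ x)
    (hey : (e : Finset ℕ) ⊆ y) : (inducedGraph (k + 1) (zeta k W)).Reachable x y := by
  obtain ⟨p⟩ := hce
  induction p generalizing x with
  | nil => exact zeta_reachable_of_subset_of_subset hk hW (Subtype.prop _) hcx hey
  | @cons u v _ huv _ ih =>
    let z : zeta k W := ⟨u ∪ v, u, u.2, v, v.2, huv.2, rfl⟩
    exact (zeta_reachable_of_subset_of_subset hk hW u.2 hcx (y := z)
      Finset.subset_union_left).trans (ih (x := z) Finset.subset_union_right hey)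

theorem connectedComponentMk_eq_of_lowerComponent_eq (hk : 1 ≤ k) (hW : W ⊆ Vnm n k)
    {x y : zeta k W} (h : lowerComponent x = lowerComponent y) :
    (inducedGraph (k + 1) (zeta k W)).connectedComponentMk x =
      (inducedGraph (k + 1) (zeta k W)).connectedComponentMk y := by
  obtain ⟨c, hcx, hx⟩ := exists_subset_lowerComponent_eq x
  obtain ⟨e, hey, hy⟩ := exists_subset_lowerComponent_eq y
  exact ConnectedComponent.sound (zeta_reachable_of_reachable hk hW
    (ConnectedComponent.exact (hx.symm.trans (h.trans hy))) hcx hey)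

theorem le_ncard_unionAll_lowerComponent_inter_of_adj (hk : 1 ≤ k) (hW : W ⊆ Vnm n k)
    {x y : zeta k W} (hxy : (inducedGraph (k + 1) (zeta k W)).Adj x y) :
    k ≤ (unionAll (componentSet (lowerComponent x)) ∩
      unionAll (componentSet (lowerComponent y))).ncard := by
  have hcard : ((x : Finset ℕ) ∩ y).card = k := hxy.2
  calc k = ((x : Set ℕ) ∩ y).ncard := by rw [← Finset.coe_inter, ncard_coe_finset, hcard]
    _ ≤ _ := ncard_le_ncard (inter_subset_inter (subset_unionAll_lowerComponent hk hW x)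
        (subset_unionAll_lowerComponent hk hW y))
        ((unionAll_componentSet_finite hW _).inter_of_left _)

theorem ncard_unionAll_componentSet_zeta_le {m : ℕ} (hk : 1 ≤ k) (hmk : m - 1 ≤ k)
    (hW : W ⊆ Vnm n k) {σ : (inducedGraph k W).ConnectedComponent → ℕ}
    (hσ : ∀ C, (unionAll (componentSet C)).ncard ≤ m - 1 + σ C)
    (D : (inducedGraph (k + 1) (zeta k W)).ConnectedComponent)
    {s : Finset (inducedGraph k W).ConnectedComponent}
    (hs : ∀ C, C ∈ s ↔ ∃ x ∈ D.supp, lowerComponent x = C) :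
    (unionAll (componentSet D)).ncard ≤ m - 1 + ∑ C ∈ s, σ C := by
  classical
  obtain ⟨x₀, hx₀⟩ := D.nonempty_supp
  have hC₀ : lowerComponent x₀ ∈ s := (hs _).2 ⟨x₀, hx₀, rfl⟩
  have hcover : unionAll (componentSet D) ⊆ ⋃ C ∈ s, unionAll (componentSet C) := by
    intro a ha
    obtain ⟨_, ⟨x, hx, rfl⟩, hax⟩ := mem_iUnion₂.1 ha
    exact mem_iUnion₂.2 ⟨_, (hs _).2 ⟨x, hx, rfl⟩, subset_unionAll_lowerComponent hk hW x hax⟩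
  have hbound := ncard_biUnion_le_of_connectedComponent lowerComponent
    (fun C => unionAll (componentSet C)) k hs (fun C _ => unionAll_componentSet_finite hW C)
    (fun x y hxy _ => le_ncard_unionAll_lowerComponent_inter_of_adj hk hW hxy) hx₀
  have hterm : ∀ C ∈ s.erase (lowerComponent x₀),
      (unionAll (componentSet C)).ncard - k ≤ σ C := fun C _ => by have := hσ C; omega
  calc (unionAll (componentSet D)).ncard
      ≤ (⋃ C ∈ s, unionAll (componentSet C)).ncard :=
        ncard_le_ncard hcover (s.finite_toSet.biUnion fun C _ => unionAll_componentSet_finite hW C)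
    _ ≤ (unionAll (componentSet (lowerComponent x₀))).ncard +
          ∑ C ∈ s.erase (lowerComponent x₀), ((unionAll (componentSet C)).ncard - k) := hbound
    _ ≤ m - 1 + σ (lowerComponent x₀) + ∑ C ∈ s.erase (lowerComponent x₀), σ C :=
        add_le_add (hσ _) (Finset.sum_le_sum hterm)
    _ = m - 1 + ∑ C ∈ s, σ C := by rw [add_assoc, Finset.add_sum_erase _ _ hC₀]

theorem HasDisjointComponentBound.map_zeta {m : ℕ} {𝒰 : Set (Set (Finset ℕ))} (hk : 1 ≤ k)
    (hmk : m - 1 ≤ k) (hW : W ⊆ Vnm n k)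
    (h : HasDisjointComponentBound m 𝒰 k W) : HasDisjointComponentBound m 𝒰 (k + 1) (zeta k W) := by
  classical
  obtain ⟨f, hf, hdisj⟩ := h
  have : Finite (zeta k W) := ((Vnm_finite n (k + 1)).subset (zeta_subset_Vnm hk hW)).to_subtype
  let lower (D : (inducedGraph (k + 1) (zeta k W)).ConnectedComponent) :=
    (toFinite (lowerComponent '' D.supp)).toFinset
  have mem_lower {D C} : C ∈ lower D ↔ ∃ x ∈ D.supp, lowerComponent x = C := Finite.mem_toFinset _
  refine ⟨fun D => (lower D).biUnion f, fun D => ⟨?_, ?_⟩, fun D D' hne => ?_⟩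
  · simpa using fun C _ => (hf C).1
  · rw [Finset.sum_biUnion fun C _ C' _ hCC' => hdisj hCC']
    exact ncard_unionAll_componentSet_zeta_le hk hmk hW (fun C => (hf C).2) D fun _ => mem_lower
  · refine (Finset.disjoint_biUnion_left _ _ _).2 fun C hC =>
      (Finset.disjoint_biUnion_right _ _ _).2 fun C' hC' => ?_
    refine hdisj fun hCC' => hne ?_
    obtain ⟨x, hx, rfl⟩ := mem_lower.1 hC
    obtain ⟨y, hy, hxy⟩ := mem_lower.1 (hCC' ▸ hC')
    rw [← hx, ← hy, connectedComponentMk_eq_of_lowerComponent_eq hk hW hxy]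

end Zeta

theorem hasDisjointComponentBound_zetaIter {n m : ℕ} {U : Set (Finset ℕ)} (hm : 1 ≤ m)
    (hU : U ⊆ Vnm n m) :
    ∀ s, HasDisjointComponentBound m (componentSets m U) (m + s) (zetaIter m s U)
  | 0 => hasDisjointComponentBound_componentSets hU
  | s + 1 => (hasDisjointComponentBound_zetaIter hm hU s).map_zeta (k := m + s) (by omega)
      (by omega) (zetaIter_subset_Vnm hm hU s)

theorem stmt10_general (n m s : ℕ) (hm : 1 ≤ m)
    (U : Set (Finset ℕ)) (hU : U ⊆ Vnm n m) :
    ∃ f : Set (Finset ℕ) → Set (Set (Finset ℕ)),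
      (∀ V ∈ componentSets (m + s) (zetaIter m s U),
        f V ⊆ componentSets m U ∧
        (unionAll V).ncard ≤ m - 1 + ∑ᶠ Z ∈ f V, Set.ncard Z) ∧
      (∀ V ∈ componentSets (m + s) (zetaIter m s U),
       ∀ V' ∈ componentSets (m + s) (zetaIter m s U),
        V ≠ V' → f V ∩ f V' = ∅) := by
  obtain ⟨g, hg, hdisj⟩ := hasDisjointComponentBound_zetaIter hm hU s
  refine ⟨extend componentSet (fun C => (g C : Set (Set (Finset ℕ)))) ⊥, ?_, ?_⟩
  · intro V hV
    obtain ⟨C, rfl⟩ := mem_componentSets.1 hV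
    rw [componentSet_injective.extend_apply, finsum_mem_coe_finset]
    exact hg C
  · intro V hV V' hV' hne
    obtain ⟨C, rfl⟩ := mem_componentSets.1 hV
    obtain ⟨C', rfl⟩ := mem_componentSets.1 hV'
    rw [componentSet_injective.extend_apply, componentSet_injective.extend_apply,
      ← disjoint_iff_inter_eq_empty, Finset.disjoint_coe]
    exact hdisj (ne_of_apply_ne _ hne)

theorem stmt10 (n m s : ℕ) (hm : 1 ≤ m) (hmn : m ≤ n) (hs : s ≤ n - m)
    (U : Set (Finset ℕ)) (hU : U ⊆ Vnm n m) :
    ∃ f : Set (Finset ℕ) → Set (Set (Finset ℕ)),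
      (∀ V ∈ componentSets (m + s) (zetaIter m s U),
        f V ⊆ componentSets m U ∧
        (unionAll V).ncard ≤ m - 1 + ∑ᶠ Z ∈ f V, Set.ncard Z) ∧
      (∀ V ∈ componentSets (m + s) (zetaIter m s U),
       ∀ V' ∈ componentSets (m + s) (zetaIter m s U),
        V ≠ V' → f V ∩ f V' = ∅) :=
  stmt10_general n m s hm U hU
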